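/- arXiv:1308.0324 — 2 statements merged into one kernel-verified Lean document; each statement's English description precedes it below -/
import Mathlib

section
/- For every integer n ≥ 1, B̃(n + 1) = Σ_{i=0}^{n−1} C(n,i) · B̃(i). -/
open Finset

abbrev SetPartition (n : ℕ) := Finpartition (Finset.univ : Finset (Fin n))

def IsTIntersecting (n t : ℕ) (A : Set (SetPartition n)) : Prop :=
  ∀ p ∈ A, ∀ q ∈ A, t ≤ (p.parts ∩ q.parts).card

noncomputable def M (n t : ℕ) : ℕ :=
  sSup {m : ℕ | ∃ A : Set (SetPartition n), IsTIntersecting n t A ∧ A.ncard = m}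

def IsNontrivTIntersecting (n t : ℕ) (A : Set (SetPartition n)) : Prop :=
  IsTIntersecting n t A ∧ {b : Finset (Fin n) | ∀ p ∈ A, b ∈ p.parts}.ncard < t

noncomputable def Mtilde (n t : ℕ) : ℕ :=
  sSup {m : ℕ | ∃ A : Set (SetPartition n), IsNontrivTIntersecting n t A ∧ A.ncard = m}

def fixedSet {n : ℕ} (p : SetPartition n) : Finset (Fin n) :=
  Finset.univ.filter (fun i => ({i} : Finset (Fin n)) ∈ p.parts)

noncomputable def Btilde (m : ℕ) : ℕ :=
  Nat.card {p : SetPartition m // ∀ b ∈ p.parts, b.card ≠ 1}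

noncomputable def Bell (m : ℕ) : ℕ := Nat.card (SetPartition m)

noncomputable def gammaQ (n t l : ℕ) : ℚ :=
  ((∑ i ∈ Finset.range (n - l + 2), (n - l + 1).choose i * Btilde (n - (l + t) / 2 + 1 - i) : ℕ) : ℚ) /
  ((∑ i ∈ Finset.range (n - l + 1), (n - l).choose i * Btilde (n - (l + t) / 2 - i) : ℕ) : ℚ)

noncomputable def maxCond (n t l : ℕ) : Prop :=
  ((l - t : ℕ) : ℚ) / (2 * ((l - 1 : ℕ) : ℚ)) * gammaQ n t l ≤ 1

def blockOf {n : ℕ} (p : SetPartition n) (i : Fin n) : Finset (Fin n) :=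
  (p.parts.filter (fun b => i ∈ b)).sup id

def fixParts {n : ℕ} (i j : Fin n) (p : SetPartition n) : Finset (Finset (Fin n)) :=
  if i ≠ j ∧ j ∈ blockOf p i then
    (p.parts \ {blockOf p i}) ∪ {({i} : Finset (Fin n)), blockOf p i \ {i}}
  else p.parts

def shiftParts {n : ℕ} (v w : Fin n) (p : SetPartition n) : Finset (Finset (Fin n)) :=
  if ({w} : Finset (Fin n)) ∈ p.parts ∧ ({v} : Finset (Fin n)) ∉ p.parts then
    (p.parts \ {blockOf p v, ({w} : Finset (Fin n))}) ∪
      {insert w (blockOf p v \ {v}), ({v} : Finset (Fin n))}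
  else p.parts

def FixClosed {n : ℕ} (A : Set (SetPartition n)) : Prop :=
  ∀ p ∈ A, ∀ i j : Fin n, i ≠ j → ∀ q : SetPartition n, q.parts = fixParts i j p → q ∈ A

def ShiftClosed {n : ℕ} (A : Set (SetPartition n)) : Prop :=
  ∀ p ∈ A, ∀ v w : Fin n, v < w → ∀ q : SetPartition n, q.parts = shiftParts v w p → q ∈ A

def DClosedOn {n : ℕ} (A : Set (SetPartition n)) (S : Set (Fin n)) : Prop :=
  ∀ p ∈ A, ∀ v ∈ S, ∀ w ∈ S, v ≠ w → ∀ q : SetPartition n, q.parts = shiftParts v w p → q ∈ A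

def Hfam (n t i : ℕ) : Finset (Finset (Fin n)) :=
  Finset.univ.filter (fun H : Finset (Fin n) =>
    (H ⊆ Finset.univ.filter (fun x : Fin n => x.val < t + i) ∧ H.card = t + 1 ∧
      Finset.univ.filter (fun x : Fin n => x.val < t) ⊆ H) ∨
    (H ⊆ Finset.univ.filter (fun x : Fin n => x.val < t + i) ∧ H.card = t + i - 1 ∧
      Finset.univ.filter (fun x : Fin n => t ≤ x.val ∧ x.val < t + i) ⊆ H))

def upset (n : ℕ) (C : Finset (Finset (Fin n))) : Finset (Finset (Fin n)) :=
  Finset.univ.filter (fun S => ∃ c ∈ C, c ⊆ S)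

noncomputable def nu (n t i : ℕ) : ℕ :=
  ∑ S ∈ upset n (Hfam n t i), Btilde (n - S.card)

def minFixedSets {n : ℕ} (A : Set (SetPartition n)) : Set (Finset (Fin n)) :=
  {E | (∃ p ∈ A, fixedSet p = E) ∧ ∀ p ∈ A, fixedSet p ⊆ E → fixedSet p = E}

noncomputable def splus {n : ℕ} (A : Set (SetPartition n)) : ℕ :=
  sSup {m : ℕ | ∃ E ∈ minFixedSets A, m = E.sup (fun x => x.val + 1)}

/-!
Fix `a` and remove the block containing it from a singleton-free partition of `insert a s`, `a ∉ s`.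
What remains is a singleton-free partition of some `C ⊊ s`: the removed block is
`insert a (s \ C)`, which has at least two elements exactly when `C ≠ s`. Conversely, every
singleton-free partition of `C` extends uniquely by that block. So the number of singleton-free
partitions of `insert a s` is the sum of the numbers for all `C ⊊ s`. Grouping the `C` by
cardinality, strong induction on `#s` shows that this number is `Nat.singletonFreeBell #s`, the
sequence defined by the recurrence itself (its value `1` at `0` counts the empty partition of `∅`).
-/

theorem Finset.sum_powerset_erase_self_apply_card {M β : Type*} [AddCancelCommMonoid M]
    [DecidableEq β] (f : ℕ → M) (s : Finset β) :
    ∑ C ∈ s.powerset.erase s, f #C = ∑ i ∈ range #s, (#s).choose i • f i := by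
  have h := sum_powerset_apply_card f (x := s)
  rwa [← sum_erase_add _ _ (mem_powerset_self s), sum_range_succ, Nat.choose_self, one_smul,
    add_left_inj] at h

namespace Nat

def singletonFreeBell : ℕ → ℕ
  | 0 => 1
  | k + 1 => ∑ i : Fin k, k.choose i * singletonFreeBell i

theorem singletonFreeBell_succ (k : ℕ) :
    singletonFreeBell (k + 1) = ∑ i ∈ range k, k.choose i * singletonFreeBell i := by
  rw [singletonFreeBell, Fin.sum_univ_eq_sum_range (fun i => k.choose i * singletonFreeBell i)]

end Nat

namespace Finpartition

variable {α : Type*} [DecidableEq α]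

def singletonFree (s : Finset α) : Finset (Finpartition s) :=
  {P | ∀ b ∈ P.parts, #b ≠ 1}

@[simp]
theorem mem_singletonFree {s : Finset α} {P : Finpartition s} :
    P ∈ singletonFree s ↔ ∀ b ∈ P.parts, #b ≠ 1 := by
  rw [singletonFree, mem_filter, and_iff_right (mem_univ P)]

theorem card_singletonFree_empty : #(singletonFree (∅ : Finset α)) = 1 := by
  rw [singletonFree, filter_true_of_mem, card_univ]
  · exact @Fintype.card_unique _ (inferInstanceAs (Unique (Finpartition (⊥ : Finset α)))) _
  · intro P _ b hb
    simp [P.parts_eq_empty_iff.2 rfl] at hb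

theorem parts_avoid_of_mem {s b : Finset α} {P : Finpartition s} (hb : b ∈ P.parts) :
    (P.avoid b).parts = P.parts.erase b := by
  ext c
  rw [mem_avoid, mem_erase]
  constructor
  · rintro ⟨d, hd, hdb, rfl⟩
    have hne : d ≠ b := fun h => hdb h.le
    have hdis : Disjoint d b := P.disjoint hd hb hne
    rw [sdiff_eq_self_of_disjoint hdis]
    exact ⟨hne, hd⟩
  · rintro ⟨hcb, hc⟩
    have hdis : Disjoint c b := P.disjoint hc hb hcb
    exact ⟨c, hc, fun h => P.ne_bot hc (hdis.eq_bot_of_le h), sdiff_eq_self_of_disjoint hdis⟩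

theorem card_filter_part_eq {u D : Finset α} {a : α} (haD : a ∈ D) (hDu : D ⊆ u) (hD : #D ≠ 1) :
    #{P ∈ singletonFree u | P.part a = D} = #(singletonFree (u \ D)) := by
  have hD₀ : D ≠ ⊥ := ne_empty_of_mem haD
  have hdisj : Disjoint (u \ D) D := sdiff_disjoint
  have hsup : u \ D ⊔ D = u := sdiff_union_of_subset hDu
  refine card_bij' (fun P _ => P.avoid D) (fun Q _ => Q.extend hD₀ hdisj hsup) ?_ ?_ ?_ ?_
  · intro P hP
    obtain ⟨hP, hPa⟩ := mem_filter.1 hP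
    rw [mem_singletonFree, parts_avoid_of_mem (hPa ▸ P.part_mem.2 (hDu haD))]
    exact fun b hb => mem_singletonFree.1 hP b (mem_of_mem_erase hb)
  · intro Q hQ
    refine mem_filter.2 ⟨mem_singletonFree.2 fun b hb => ?_,
      (Q.extend hD₀ hdisj hsup).part_eq_of_mem (mem_insert_self _ _) haD⟩
    rcases mem_insert.1 hb with rfl | hb
    exacts [hD, mem_singletonFree.1 hQ b hb]
  · intro P hP
    have hDP : D ∈ P.parts := (mem_filter.1 hP).2 ▸ P.part_mem.2 (hDu haD)
    ext1
    rw [extend_parts, parts_avoid_of_mem hDP, insert_erase hDP]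
  · intro Q _
    have hDQ : D ∉ Q.parts := fun h => (mem_sdiff.1 (Q.le h haD)).2 haD
    ext1
    rw [parts_avoid_of_mem (by rw [extend_parts]; exact mem_insert_self _ _), extend_parts,
      erase_insert hDQ]

theorem card_singletonFree_insert {s : Finset α} {a : α} (ha : a ∉ s) :
    #(singletonFree (insert a s)) = ∑ C ∈ s.powerset.erase s, #(singletonFree C) := by
  set u := insert a s
  have hau : a ∈ u := mem_insert_self a s
  have hmaps : ∀ P ∈ singletonFree u, u \ P.part a ∈ s.powerset := fun P _ => by
    rw [mem_powerset, sdiff_le_iff]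
    exact insert_subset (mem_union_left _ (P.mem_part_self.2 hau)) subset_union_right
  have hfiber : ∀ C ∈ s.powerset, {P ∈ singletonFree u | u \ P.part a = C} =
      {P ∈ singletonFree u | P.part a = u \ C} := fun C hC => by
    refine filter_congr fun P _ => ⟨fun h => ?_, fun h => ?_⟩
    · rw [← h, Finset.sdiff_sdiff_eq_self (P.part_subset a)]
    · rw [h, Finset.sdiff_sdiff_eq_self ((mem_powerset.1 hC).trans (subset_insert a s))]
  have hblock_singleton : #{P ∈ singletonFree u | u \ P.part a = s} = 0 := by
    rw [hfiber s (mem_powerset_self s), insert_sdiff_cancel ha, card_eq_zero, filter_eq_empty_iff]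
    intro P hP h
    exact mem_singletonFree.1 hP _ (P.part_mem.2 hau) (by rw [h, card_singleton])
  rw [card_eq_sum_card_fiberwise hmaps, ← sum_erase_add _ _ (mem_powerset_self s), hblock_singleton,
    add_zero]
  refine sum_congr rfl fun C hC => ?_
  obtain ⟨hCs, hCsub⟩ := mem_erase.1 hC
  have hCu : C ⊆ u := (mem_powerset.1 hCsub).trans (subset_insert a s)
  have haC : a ∈ u \ C := mem_sdiff.2 ⟨hau, fun h => ha (mem_powerset.1 hCsub h)⟩
  have hcard : #(u \ C) ≠ 1 := by
    have := card_lt_card (ssubset_of_subset_of_ne (mem_powerset.1 hCsub) hCs)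
    rw [card_sdiff_of_subset hCu, card_insert_of_notMem ha]
    omega
  rw [hfiber C hCsub, card_filter_part_eq haC sdiff_subset hcard, Finset.sdiff_sdiff_eq_self hCu]

theorem card_singletonFree (s : Finset α) : #(singletonFree s) = Nat.singletonFreeBell #s := by
  induction s using Finset.strongInduction with
  | H s ih =>
    rcases s.eq_empty_or_nonempty with rfl | ⟨a, ha⟩
    · rw [card_singletonFree_empty, card_empty, Nat.singletonFreeBell]
    · rw [← insert_erase ha, card_singletonFree_insert (notMem_erase a s),
        card_insert_of_notMem (notMem_erase a s), Nat.singletonFreeBell_succ]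
      simp only [← smul_eq_mul, ← sum_powerset_erase_self_apply_card]
      exact sum_congr rfl fun C hC =>
        ih C ((mem_powerset.1 (mem_of_mem_erase hC)).trans_ssubset (erase_ssubset ha))

end Finpartition

theorem btilde_eq_singletonFreeBell (m : ℕ) : Btilde m = Nat.singletonFreeBell m := by
  rw [Btilde, Nat.card_eq_fintype_card,
    Fintype.card_of_subtype (Finpartition.singletonFree univ) fun _ =>
      Finpartition.mem_singletonFree,
    Finpartition.card_singletonFree, card_fin]

theorem btilde_recurrence_general (n : ℕ) :
    Btilde (n + 1) = ∑ i ∈ Finset.range n, n.choose i * Btilde i := by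
  simp only [btilde_eq_singletonFreeBell, Nat.singletonFreeBell_succ]

/-- Recurrence for the singleton-free Bell numbers. -/
theorem btilde_recurrence (n : ℕ) (hn : 1 ≤ n) :
    Btilde (n + 1) = ∑ i ∈ Finset.range n, n.choose i * Btilde i :=
  btilde_recurrence_general n
end

section
/- For every integer n ≥ 0, B̃(n) = Σ_{i=0}^{n} (−1)^{n−i} · C(n,i) · B(i). -/
open Finset

/-!
Recording which points of `s` lie in blocks of size at least two, a partition of `s` is the same
thing as a subset `u ⊆ s` together with a singleton-free partition of `u`. Hence
`B(m) = ∑ⱼ C(m, j) B̃(j)`, and binomial inversion turns this into the claimed formula for `B̃(n)`.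
-/

-- The left side is the `n`-th forward difference of `x ↦ C(x, j)` at `0`.
theorem sum_neg_one_pow_mul_choose_mul_choose (n j : ℕ) :
    ∑ i ∈ range (n + 1), (-1 : ℤ) ^ (n - i) * n.choose i * i.choose j = if n = j then 1 else 0 := by
  have := fwdDiff_iter_choose_zero j n
  rw [fwdDiff_iter_eq_sum_shift] at this
  simpa [smul_eq_mul] using this

theorem binomial_inversion {R : Type*} [CommRing R] {f g : ℕ → R}
    (hg : ∀ m, g m = ∑ j ∈ range (m + 1), (m.choose j : R) * f j) (n : ℕ) :
    f n = ∑ i ∈ range (n + 1), (-1) ^ (n - i) * (n.choose i : R) * g i := by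
  have hg_range : ∀ i ∈ range (n + 1), g i = ∑ j ∈ range (n + 1), (i.choose j : R) * f j := by
    intro i hi
    rw [hg]
    refine sum_subset (range_subset_range.2 (by simpa [Nat.lt_succ_iff] using hi)) ?_
    intro j _ hj
    rw [Nat.choose_eq_zero_of_lt (by simpa using hj), Nat.cast_zero, zero_mul]
  calc f n = ∑ j ∈ range (n + 1), ((if n = j then 1 else 0 : ℤ) : R) * f j := by
          simp [Int.cast_ite]
    _ = ∑ i ∈ range (n + 1), (-1) ^ (n - i) * (n.choose i : R) *
          ∑ j ∈ range (n + 1), (i.choose j : R) * f j := by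
      simp_rw [← sum_neg_one_pow_mul_choose_mul_choose, mul_sum, Int.cast_sum, sum_mul]
      rw [sum_comm]
      push_cast
      exact sum_congr rfl fun i _ => sum_congr rfl fun j _ => by ring
    _ = ∑ i ∈ range (n + 1), (-1) ^ (n - i) * (n.choose i : R) * g i :=
      sum_congr rfl fun i hi => by rw [hg_range i hi]

namespace Finpartition

variable {α β : Type*} [DecidableEq α]

def SingletonFree {s : Finset α} (P : Finpartition s) : Prop :=
  ∀ b ∈ P.parts, #b ≠ 1

section Embedding

variable [DecidableEq β] {t : Finset β} (f : β ↪ α)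

def mapEmbedding (P : Finpartition t) : Finpartition (t.map f) :=
  ofExistsUnique (P.parts.image (·.map f))
    (by
      simp only [mem_image]
      rintro _ ⟨b, hb, rfl⟩
      exact map_subset_map.2 (P.subset hb))
    (by
      simp only [mem_map, mem_image, forall_exists_index, and_imp, forall_apply_eq_imp_iff₂]
      intro x hx
      obtain ⟨b, hb, hxb⟩ := P.exists_mem hx
      refine ⟨b.map f, ⟨⟨b, hb, rfl⟩, mem_map_of_mem f hxb⟩, ?_⟩
      rintro _ ⟨⟨c, hc, rfl⟩, hxc⟩
      rw [P.eq_of_mem_parts hc hb ((mem_map' f).1 hxc) hxb])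
    (by simp)

noncomputable def comap (Q : Finpartition (t.map f)) : Finpartition t :=
  ofExistsUnique (Q.parts.image (·.preimage f f.injective.injOn))
    (by
      simp only [mem_image]
      rintro _ ⟨b, hb, rfl⟩ x hx
      exact (mem_map' f).1 (Q.subset hb (mem_preimage.1 hx)))
    (by
      intro x hx
      obtain ⟨b, hb, hxb⟩ := Q.exists_mem (mem_map_of_mem f hx)
      refine ⟨_, ⟨mem_image_of_mem _ hb, mem_preimage.2 hxb⟩, ?_⟩
      rintro _ ⟨hc, hxc⟩
      obtain ⟨c, hcQ, rfl⟩ := mem_image.1 hc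
      rw [Q.eq_of_mem_parts hcQ hb (mem_preimage.1 hxc) hxb])
    (by
      simp only [mem_image, not_exists, not_and]
      intro b hb hempty
      obtain ⟨y, hy⟩ := Q.nonempty_of_mem_parts hb
      obtain ⟨x, -, rfl⟩ := mem_map.1 (Q.subset hb hy)
      simpa [hempty] using (mem_preimage (hf := f.injective.injOn)).2 hy)

noncomputable def mapEmbeddingEquiv : Finpartition t ≃ Finpartition (t.map f) where
  toFun := mapEmbedding f
  invFun := comap f
  left_inv P := by
    ext1
    simp [comap, mapEmbedding, image_image, Function.comp_def]
  right_inv Q := by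
    ext1
    simp only [comap, mapEmbedding, ofExistsUnique_parts, image_image]
    refine (image_congr fun b hb => ?_).trans image_id'
    obtain ⟨u, -, rfl⟩ := subset_map_iff.1 (Q.subset hb)
    simp

theorem singletonFree_mapEmbedding {P : Finpartition t} :
    (P.mapEmbedding f).SingletonFree ↔ P.SingletonFree := by
  simp [SingletonFree, mapEmbedding]

theorem card_singletonFree_map :
    Nat.card {Q : Finpartition (t.map f) // Q.SingletonFree} =
      Nat.card {P : Finpartition t // P.SingletonFree} :=
  Nat.card_congr
    ((mapEmbeddingEquiv f).subtypeEquiv fun _ => (singletonFree_mapEmbedding f).symm).symm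

end Embedding

theorem card_singletonFree_eq_btilde (s : Finset α) :
    Nat.card {P : Finpartition s // P.SingletonFree} = Btilde #s := by
  let f : Fin #s ↪ α := s.equivFin.symm.toEmbedding.trans (Function.Embedding.subtype _)
  have hf : univ.map f = s := by
    rw [← map_map, map_univ_equiv, ← attach_eq_univ, attach_map_val]
  calc Nat.card {P : Finpartition s // P.SingletonFree}
      = Nat.card {P : Finpartition (univ.map f) // P.SingletonFree} := by rw [hf]
    _ = Btilde #s := card_singletonFree_map f

def disjUnion {s t : Finset α} (P : Finpartition s) (Q : Finpartition t) (h : Disjoint s t) :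
    Finpartition (s ∪ t) where
  parts := P.parts ∪ Q.parts
  supIndep := by
    rw [supIndep_iff_pairwiseDisjoint, coe_union, Set.pairwiseDisjoint_union]
    exact ⟨P.disjoint, Q.disjoint, fun b hb c hc _ => h.mono (P.le hb) (Q.le hc)⟩
  sup_parts := by rw [sup_union, P.sup_parts, Q.sup_parts, sup_eq_union]
  bot_notMem := by simp

section Singletons

variable {s u : Finset α}

def nonsingletonSupport (P : Finpartition s) : Finset α :=
  {b ∈ P.parts | #b ≠ 1}.sup id

def dropSingletons (P : Finpartition s) : Finpartition P.nonsingletonSupport :=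
  P.ofSubset (filter_subset _ _) rfl

def addSingletons (Q : Finpartition u) (h : u ⊆ s) : Finpartition s :=
  (Q.disjUnion ⊥ disjoint_sdiff).copy (union_sdiff_of_subset h)

theorem singleton_mem_parts_iff (P : Finpartition s) {x : α} :
    {x} ∈ P.parts ↔ x ∈ s ∧ x ∉ P.nonsingletonSupport := by
  simp only [nonsingletonSupport, mem_sup, mem_filter, id_eq, not_exists, not_and]
  constructor
  · intro hx
    refine ⟨P.subset hx (mem_singleton_self x), fun b ⟨hb, hb1⟩ hxb => hb1 ?_⟩
    rw [P.eq_of_mem_parts hb hx hxb (mem_singleton_self x), card_singleton]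
  · rintro ⟨hxs, hx⟩
    obtain ⟨b, hb, hxb⟩ := P.exists_mem hxs
    obtain ⟨y, rfl⟩ := card_eq_one.1 (not_not.1 fun hb1 => hx b ⟨hb, hb1⟩ hxb)
    rwa [mem_singleton.1 hxb]

theorem map_singleton_sdiff_nonsingletonSupport (P : Finpartition s) :
    (s \ P.nonsingletonSupport).map ⟨singleton, singleton_injective⟩ = {b ∈ P.parts | #b = 1} := by
  ext b
  simp only [mem_map, mem_sdiff, Function.Embedding.coeFn_mk, mem_filter, card_eq_one]
  constructor
  · rintro ⟨x, hx, rfl⟩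
    exact ⟨P.singleton_mem_parts_iff.2 hx, x, rfl⟩
  · rintro ⟨hb, x, rfl⟩
    exact ⟨x, P.singleton_mem_parts_iff.1 hb, rfl⟩

theorem addSingletons_parts (Q : Finpartition u) (h : u ⊆ s) :
    (Q.addSingletons h).parts = Q.parts ∪ (s \ u).map ⟨singleton, singleton_injective⟩ :=
  rfl

theorem filter_parts_addSingletons {Q : Finpartition u} (hQ : Q.SingletonFree) (h : u ⊆ s) :
    {b ∈ (Q.addSingletons h).parts | #b ≠ 1} = Q.parts := by
  rw [addSingletons_parts, filter_union, filter_true_of_mem hQ, union_eq_left]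
  intro b hb
  obtain ⟨x, -, rfl⟩ := mem_map.1 (mem_filter.1 hb).1
  exact absurd (card_singleton x) (mem_filter.1 hb).2

def nonsingletonSupportEquiv (h : u ⊆ s) :
    {P : Finpartition s // P.nonsingletonSupport = u} ≃
      {Q : Finpartition u // Q.SingletonFree} where
  toFun P := ⟨P.1.dropSingletons.copy P.2, fun _ hb => (mem_filter.1 hb).2⟩
  invFun Q := ⟨Q.1.addSingletons h, by
    rw [nonsingletonSupport, filter_parts_addSingletons Q.2, Q.1.sup_parts]⟩
  left_inv := by
    rintro ⟨P, rfl⟩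
    ext1; ext1
    change {b ∈ P.parts | #b ≠ 1} ∪ (s \ P.nonsingletonSupport).map _ = P.parts
    rw [map_singleton_sdiff_nonsingletonSupport, union_comm]
    simpa only [ne_eq] using filter_union_filter_not_eq (#· = 1) P.parts
  right_inv Q := by
    ext1; ext1
    exact filter_parts_addSingletons Q.2 h

theorem card_eq_sum_card_singletonFree (s : Finset α) :
    Fintype.card (Finpartition s) =
      ∑ u ∈ s.powerset, Nat.card {Q : Finpartition u // Q.SingletonFree} := by
  rw [← card_univ, card_eq_sum_card_fiberwise (f := nonsingletonSupport) (t := s.powerset)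
    fun P _ => mem_powerset.2 (Finset.sup_le fun b hb => P.subset (mem_filter.1 hb).1)]
  refine sum_congr rfl fun u hu => ?_
  rw [← Nat.card_congr (nonsingletonSupportEquiv (mem_powerset.1 hu)), Nat.card_eq_fintype_card,
    Fintype.card_subtype]

end Singletons

theorem card_eq_sum_choose_mul_btilde (s : Finset α) :
    Fintype.card (Finpartition s) = ∑ j ∈ range (#s + 1), (#s).choose j * Btilde j := by
  simp only [card_eq_sum_card_singletonFree, card_singletonFree_eq_btilde, sum_powerset_apply_card,
    smul_eq_mul]

end Finpartition

theorem bell_eq_sum_choose_mul_btilde (m : ℕ) :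
    Bell m = ∑ j ∈ range (m + 1), m.choose j * Btilde j := by
  rw [Bell, Nat.card_eq_fintype_card, Finpartition.card_eq_sum_choose_mul_btilde, card_univ,
    Fintype.card_fin]

/-- Inverse binomial transform: B̃(n) = Σ (-1)^{n-i} C(n,i) B(i). -/
theorem btilde_inverse_binomial (n : ℕ) :
    (Btilde n : ℤ) =
      ∑ i ∈ Finset.range (n + 1), (-1) ^ (n - i) * (n.choose i : ℤ) * (Bell i : ℤ) :=
  binomial_inversion (f := fun j => (Btilde j : ℤ)) (g := fun i => (Bell i : ℤ))
    (fun m => by exact_mod_cast bell_eq_sum_choose_mul_btilde m) n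
end
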